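/- Let n ≥ 2, let Γ ⊆ PU(1,n) be a discrete group, and let (γ_m) ⊆ Γ be a sequence tending simply to infinity. Then there exist two pseudo-projective transformations τ and ϑ such that: (1) γ_m → τ and γ_m^{−1} → ϑ in QP(n+1,ℂ); (2) the images Im(τ) and Im(ϑ) are single points lying in the Chen–Greenberg limit set Λ_CG(Γ), and they satisfy Im(τ)^⊥ = Ker(ϑ) and Im(ϑ)^⊥ = Ker(τ). -/

import Mathlib

/-!
Write `γ_m = k₁ A(λ_m) k₂` with `A(λ) = diag(e^λ, 1, …, 1, e^{-λ})`. The rescaled matrices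
`e^{-λ_m} γ_m` converge to `M = K₁ diag(1, 0, …, 0) K₂`, which is the rank-one map
`v ↦ ⟨v, b⟩ a` with `a = K₁ e₀` and `b = K₂⁻¹ eₙ` isotropic. In `U(1,n)` one has
`g⁻¹ = H g* H`, so the rescaled inverses converge to the `H`-adjoint of `M`, namely
`v ↦ ⟨v, a⟩ b`. A rank-one map `v ↦ ⟨v, b⟩ a` has image `[a]` and kernel `b^⊥`; since a negative
vector is orthogonal to no nonzero isotropic vector, it sends every point of `ℍⁿ_ℂ` to `[a]`, so
the orbit of such a point accumulates at `[a]`, which therefore lies in `Λ_CG(Γ)`.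
-/

noncomputable section

open scoped ComplexConjugate
open Filter Topology
open scoped Matrix

namespace CKG

/-- The underlying vector space `ℂ^{n+1}`. -/
abbrev Vc (n : ℕ) := Fin (n + 1) → ℂ

/-- The space of `(n+1) × (n+1)` complex matrices. -/
abbrev Mat (n : ℕ) := Matrix (Fin (n + 1)) (Fin (n + 1)) ℂ

instance projTopInst (K V : Type*) [DivisionRing K] [AddCommGroup V] [Module K V]
    [TopologicalSpace V] : TopologicalSpace (Projectivization K V) :=
  inferInstanceAs (TopologicalSpace (Quotient (projectivizationSetoid K V)))

/-- The complex projective space `ℙⁿ_ℂ`. -/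
abbrev Prj (n : ℕ) := Projectivization ℂ (Vc n)

/-- The Hermitian matrix `H` with ones at the corners `(1,n+1)`, `(n+1,1)` and the identity
in the central `(n-1) × (n-1)` block. -/
def Hmat (n : ℕ) : Mat n := fun i j =>
  if (i = 0 ∧ j = Fin.last n) ∨ (i = Fin.last n ∧ j = 0) ∨
      (i = j ∧ i ≠ 0 ∧ i ≠ Fin.last n) then 1 else 0

/-- The Hermitian form of signature `(1,n)` induced by `H`. -/
def herm (n : ℕ) (v w : Vc n) : ℂ := ∑ i, ∑ j, v i * Hmat n i j * conj (w j)

/-- `U(1,n)`, the subgroup of `GL(n+1, ℂ)` preserving the Hermitian form `H`. -/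
def U1n (n : ℕ) : Subgroup (GL (Fin (n + 1)) ℂ) where
  carrier := {g | (g : Mat n) * Hmat n * (g : Mat n)ᴴ = Hmat n}
  one_mem' := by simp
  mul_mem' := by
    intro a b ha hb
    simp only [Set.mem_setOf_eq, Units.val_mul] at *
    have h : (a : Mat n) * (b : Mat n) * Hmat n * ((a : Mat n) * (b : Mat n))ᴴ
        = (a : Mat n) * ((b : Mat n) * Hmat n * (b : Mat n)ᴴ) * (a : Mat n)ᴴ := by
      simp only [Matrix.conjTranspose_mul, Matrix.mul_assoc]
    rw [h, hb, ha]
  inv_mem' := by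
    intro x hx
    simp only [Set.mem_setOf_eq] at *
    have hdet : IsUnit (x : Mat n).det := (Matrix.isUnit_iff_isUnit_det _).mp x.isUnit
    have hdetH : IsUnit ((x : Mat n)ᴴ).det := by
      rw [Matrix.det_conjTranspose]; exact hdet.star
    have h1 : ((x : Mat n))⁻¹ * (x : Mat n) = 1 := Matrix.nonsing_inv_mul _ hdet
    have h2 : ((x : Mat n))ᴴ * ((x : Mat n)ᴴ)⁻¹ = 1 := Matrix.mul_nonsing_inv _ hdetH
    rw [Matrix.coe_units_inv]
    calc ((x : Mat n))⁻¹ * Hmat n * (((x : Mat n))⁻¹)ᴴ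
        = ((x : Mat n))⁻¹ * Hmat n * ((x : Mat n)ᴴ)⁻¹ := by
          rw [Matrix.conjTranspose_nonsing_inv]
      _ = ((x : Mat n))⁻¹ * ((x : Mat n) * Hmat n * (x : Mat n)ᴴ) * ((x : Mat n)ᴴ)⁻¹ := by
          rw [hx]
      _ = (((x : Mat n))⁻¹ * (x : Mat n)) * Hmat n * ((x : Mat n)ᴴ * ((x : Mat n)ᴴ)⁻¹) := by
          simp only [Matrix.mul_assoc]
      _ = Hmat n := by rw [h1, h2, Matrix.one_mul, Matrix.mul_one]

/-- The linear automorphism of `ℂ^{n+1}` induced by an element of `GL(n+1,ℂ)`. -/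
def glEquiv {n : ℕ} (g : GL (Fin (n + 1)) ℂ) : Vc n ≃ₗ[ℂ] Vc n :=
  LinearMap.GeneralLinearGroup.generalLinearEquiv ℂ (Vc n)
    (Matrix.GeneralLinearGroup.toLin g)

/-- The projective transformation of `ℙⁿ_ℂ` induced by an element of `GL(n+1,ℂ)`. -/
def glAct {n : ℕ} (g : GL (Fin (n + 1)) ℂ) : Prj n → Prj n :=
  Projectivization.map (glEquiv g).toLinearMap (glEquiv g).injective

lemma glEquiv_apply {n : ℕ} (g : GL (Fin (n + 1)) ℂ) (v : Vc n) :
    glEquiv g v = (g : Mat n).mulVec v := rfl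

lemma glEquiv_one {n : ℕ} (v : Vc n) : glEquiv (1 : GL (Fin (n + 1)) ℂ) v = v := by
  rw [glEquiv_apply]
  simp

lemma glAct_one {n : ℕ} : glAct (1 : GL (Fin (n + 1)) ℂ) = id := by
  funext x
  induction x using Projectivization.ind with
  | h v hv =>
    simp only [glAct, Projectivization.map_mk, id_eq, LinearEquiv.coe_coe]
    congr 1
    exact glEquiv_one v

lemma glEquiv_mul {n : ℕ} (a b : GL (Fin (n + 1)) ℂ) (v : Vc n) :
    glEquiv (a * b) v = glEquiv a (glEquiv b v) := by
  simp only [glEquiv_apply, Units.val_mul, Matrix.mulVec_mulVec]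

lemma glAct_mul {n : ℕ} (a b : GL (Fin (n + 1)) ℂ) :
    glAct (a * b) = glAct a ∘ glAct b := by
  funext x
  induction x using Projectivization.ind with
  | h v hv =>
    simp only [glAct, Function.comp_apply, Projectivization.map_mk, LinearEquiv.coe_coe]
    congr 1
    exact glEquiv_mul a b v

/-- The action homomorphism from `U(1,n)` to the monoid of self-maps of `ℙⁿ_ℂ`. -/
def endHom (n : ℕ) : U1n n →* Function.End (Prj n) where
  toFun g := glAct (g : GL (Fin (n + 1)) ℂ)
  map_one' := glAct_one
  map_mul' _ _ := glAct_mul _ _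

/-- `PU(1,n)`, the projectivization of `U(1,n)` : the quotient of `U(1,n)` by the kernel of its
action on `ℙⁿ_ℂ`. -/
abbrev PU1n (n : ℕ) := U1n n ⧸ (endHom n).ker

/-- The action of `PU(1,n)` on `ℙⁿ_ℂ`. -/
def act (n : ℕ) (γ : PU1n n) : Prj n → Prj n :=
  QuotientGroup.lift (endHom n).ker (endHom n) (le_refl _) γ

/-- The complex hyperbolic ball `ℍⁿ_ℂ`. -/
def ball (n : ℕ) : Set (Prj n) := {p | (herm n p.rep p.rep).re < 0}

/-- The boundary `∂ℍⁿ_ℂ` of the complex hyperbolic ball. -/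
def bdry (n : ℕ) : Set (Prj n) := {p | herm n p.rep p.rep = 0}

/-- The projective hyperplane `p^⊥` of points orthogonal to `p` with respect to the form. -/
def orthHyp (n : ℕ) (p : Prj n) : Set (Prj n) := {q | herm n q.rep p.rep = 0}

/-- The Chen–Greenberg limit set: the set of accumulation points in `∂ℍⁿ_ℂ` of the
orbit of a point of `ℍⁿ_ℂ`. -/
def LambdaCG (n : ℕ) (Γ : Subgroup (PU1n n)) : Set (Prj n) :=
  {q | q ∈ bdry n ∧ ∃ x ∈ ball n, ∃ γ : ℕ → Γ, Function.Injective γ ∧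
    Tendsto (fun m => act n (γ m) x) atTop (𝓝 q)}

/-- `L₀(Γ)`: the closure of the set of points with infinite isotropy group. -/
def L0 (n : ℕ) (Γ : Subgroup (PU1n n)) : Set (Prj n) :=
  closure {p | {γ : Γ | act n γ p = p}.Infinite}

/-- The set of cluster points of the orbit `Γ z`. -/
def orbCluster (n : ℕ) (Γ : Subgroup (PU1n n)) (z : Prj n) : Set (Prj n) :=
  {q | ∃ γ : ℕ → Γ, Function.Injective γ ∧
    Tendsto (fun m => act n (γ m) z) atTop (𝓝 q)}

/-- `L₁(Γ)`: the closure of the set of cluster points of orbits of points outside `L₀(Γ)`. -/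
def L1 (n : ℕ) (Γ : Subgroup (PU1n n)) : Set (Prj n) :=
  closure (⋃ z ∈ (L0 n Γ)ᶜ, orbCluster n Γ z)

/-- `Λ(Γ) = L₀(Γ) ∪ L₁(Γ)`. -/
def Lam (n : ℕ) (Γ : Subgroup (PU1n n)) : Set (Prj n) := L0 n Γ ∪ L1 n Γ

/-- The set of cluster points of `Γ K` for a set `K`. -/
def setCluster (n : ℕ) (Γ : Subgroup (PU1n n)) (K : Set (Prj n)) : Set (Prj n) :=
  {q | ∃ (γ : ℕ → Γ) (k : ℕ → Prj n), Function.Injective γ ∧ (∀ m, k m ∈ K) ∧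
    Tendsto (fun m => act n (γ m) (k m)) atTop (𝓝 q)}

/-- `L₂(Γ)`: the closure of the union of cluster points of `Γ K` over compact sets
`K ⊆ ℙⁿ_ℂ \ Λ(Γ)`. -/
def L2 (n : ℕ) (Γ : Subgroup (PU1n n)) : Set (Prj n) :=
  closure (⋃ K ∈ {K : Set (Prj n) | IsCompact K ∧ K ⊆ (Lam n Γ)ᶜ}, setCluster n Γ K)

/-- The Kulkarni limit set `Λ_Kul(Γ) = Λ(Γ) ∪ L₂(Γ)`. -/
def LambdaKul (n : ℕ) (Γ : Subgroup (PU1n n)) : Set (Prj n) := Lam n Γ ∪ L2 n Γ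

/-- The Kulkarni discontinuity region `Ω_Kul(Γ)`. -/
def OmegaKul (n : ℕ) (Γ : Subgroup (PU1n n)) : Set (Prj n) := (LambdaKul n Γ)ᶜ

/-- The standard Hermitian inner product on `ℂ^{n+1}`. -/
def inner0 (n : ℕ) (v w : Vc n) : ℂ := ∑ i, v i * conj (w i)

/-- The Fubini–Study distance on `ℙⁿ_ℂ`. -/
def dFS (n : ℕ) (p q : Prj n) : ℝ :=
  Real.arccos (Real.sqrt (Complex.normSq (inner0 n p.rep q.rep) /
    ((inner0 n p.rep p.rep).re * (inner0 n q.rep q.rep).re)))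

/-- The equicontinuity set of `Γ`: points having a neighborhood on which the family `Γ` is
equicontinuous with respect to the Fubini–Study metric. -/
def EqSet (n : ℕ) (Γ : Subgroup (PU1n n)) : Set (Prj n) :=
  {x | ∃ U ∈ 𝓝 x, ∀ y ∈ U, ∀ ε > (0 : ℝ), ∃ V ∈ 𝓝 y, ∀ z ∈ V, ∀ γ : Γ,
    dFS n (act n γ y) (act n γ z) < ε}

/-- `Γ` acts properly discontinuously on the open set `U`:
for every compact `K ⊆ U` the set `{γ ∈ Γ | γK ∩ K ≠ ∅}` is finite. -/
def ProperlyDiscOn (n : ℕ) (Γ : Subgroup (PU1n n)) (U : Set (Prj n)) : Prop :=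
  ∀ K : Set (Prj n), K ⊆ U → IsCompact K →
    {γ : Γ | (act n γ '' K ∩ K).Nonempty}.Finite

/-- The projective line through two points, as a set of points of `ℙⁿ_ℂ`. -/
def lineThrough (n : ℕ) (p q : Prj n) : Set (Prj n) :=
  {r | r.rep ∈ Submodule.span ℂ {Projectivization.rep p, Projectivization.rep q}}

/-- `ℓ` is a projective line with `p ∈ ℓ ⊆ p^⊥`. -/
def IsLineAt (n : ℕ) (p : Prj n) (ℓ : Set (Prj n)) : Prop :=
  ∃ q : Prj n, q ≠ p ∧ q ∈ orthHyp n p ∧ ℓ = lineThrough n p q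

/-- `p^⊥(p)`: the space of projective lines `ℓ` with `p ∈ ℓ ⊆ p^⊥`. -/
def LinesAt (n : ℕ) (p : Prj n) := {ℓ : Set (Prj n) // IsLineAt n p ℓ}

/-- The angular distance `arccos √(⟨q₁,q₂⟩⟨q₂,q₁⟩/(⟨q₁,q₁⟩⟨q₂,q₂⟩))` between two points. -/
def dAngle (n : ℕ) (a b : Prj n) : ℝ :=
  Real.arccos (Real.sqrt (Complex.normSq (herm n a.rep b.rep) /
    ((herm n a.rep a.rep).re * (herm n b.rep b.rep).re)))

/-- A choice of a point `q ≠ p` on a line `ℓ ∈ p^⊥(p)`. -/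
def dirOf (n : ℕ) (p : Prj n) (ℓ : LinesAt n p) : Prj n := Classical.choose ℓ.2

/-- The metric `d_p` on `p^⊥(p)`. -/
def dLine (n : ℕ) (p : Prj n) (ℓ₁ ℓ₂ : LinesAt n p) : ℝ :=
  dAngle n (dirOf n p ℓ₁) (dirOf n p ℓ₂)

/-- `f` is an isometry from `(p^⊥(p), d_p)` to `(q^⊥(q), d_q)`. -/
def IsIsomLines (n : ℕ) (p q : Prj n) (f : LinesAt n p → LinesAt n q) : Prop :=
  Function.Bijective f ∧ ∀ ℓ₁ ℓ₂ : LinesAt n p, dLine n q (f ℓ₁) (f ℓ₂) = dLine n p ℓ₁ ℓ₂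

/-- The space `QP(n+1,ℂ)` of pseudo-projective maps: nonzero `(n+1) × (n+1)` matrices up to a
scalar. -/
abbrev QP (n : ℕ) := Projectivization ℂ (Mat n)

/-- The matrix underlying an element of `U(1,n)`. -/
def matOf (n : ℕ) (g : U1n n) : Mat n := ((g : GL (Fin (n + 1)) ℂ) : Mat n)

lemma matOf_ne_zero (n : ℕ) (g : U1n n) : matOf n g ≠ 0 := by
  intro h
  have h1 : matOf n g * (((g : GL (Fin (n + 1)) ℂ))⁻¹ : GL (Fin (n + 1)) ℂ).val = 1 :=
    Units.mul_inv _
  rw [h, zero_mul] at h1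
  have h2 := congrFun (congrFun h1 0) 0
  simp [Matrix.one_apply] at h2

/-- The pseudo-projective map determined by an element of `U(1,n)`. -/
def qpMk (n : ℕ) (g : U1n n) : QP n := Projectivization.mk ℂ (matOf n g) (matOf_ne_zero n g)

/-- The image of a pseudo-projective map, as a subset of `ℙⁿ_ℂ`. -/
def ImSet (n : ℕ) (τ : QP n) : Set (Prj n) :=
  {q | ∃ (v : Vc n) (hv : τ.rep.mulVec v ≠ 0), q = Projectivization.mk ℂ (τ.rep.mulVec v) hv}

/-- The kernel of a pseudo-projective map, as a subset of `ℙⁿ_ℂ`. -/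
def KerSet (n : ℕ) (τ : QP n) : Set (Prj n) := {q | τ.rep.mulVec q.rep = 0}

/-- The diagonal matrix `diag(e^t, 1, …, 1, e^{-t})` appearing in the Cartan decomposition. -/
def Amat (n : ℕ) (t : ℝ) : Mat n :=
  Matrix.diagonal (fun i => if i = 0 then (Real.exp t : ℂ)
    else if i = Fin.last n then (Real.exp (-t) : ℂ) else 1)

/-- The compact group `K = PU(n+1) ∩ PU(1,n)` (at the level of `U(1,n)`): unitary elements. -/
def KSet (n : ℕ) : Set (U1n n) := {k | matOf n k ∈ Matrix.unitaryGroup (Fin (n + 1)) ℂ}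

/-- A sequence in `PU(1,n)` tends simply to infinity: it consists of distinct elements, the
compact factors of the Cartan decompositions converge in `K`, and the exponents `λ_m` tend to
infinity. -/
def TendsSimply (n : ℕ) (γ : ℕ → PU1n n) : Prop :=
  Function.Injective γ ∧
  ∃ (g k₁ k₂ : ℕ → U1n n) (lam : ℕ → ℝ) (k₁' k₂' : U1n n),
    (∀ m, (QuotientGroup.mk (g m) : PU1n n) = γ m) ∧
    (∀ m, k₁ m ∈ KSet n ∧ k₂ m ∈ KSet n) ∧ k₁' ∈ KSet n ∧ k₂' ∈ KSet n ∧
    (∀ m, 0 ≤ lam m) ∧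
    (∀ m, matOf n (g m) = matOf n (k₁ m) * Amat n (lam m) * matOf n (k₂ m)) ∧
    Tendsto (fun m => matOf n (k₁ m)) atTop (𝓝 (matOf n k₁')) ∧
    Tendsto (fun m => matOf n (k₂ m)) atTop (𝓝 (matOf n k₂')) ∧
    Tendsto lam atTop atTop

/-- `𝒟_{(γ_m)}(x)`: the union over all sequences `x_m → x` of the accumulation points of
`(γ_m(x_m))`. -/
def Dlim (n : ℕ) (γ : ℕ → PU1n n) (x : Prj n) : Set (Prj n) :=
  {q | ∃ (xs : ℕ → Prj n) (φ : ℕ → ℕ), StrictMono φ ∧ Tendsto xs atTop (𝓝 x) ∧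
    Tendsto (fun m => act n (γ (φ m)) (xs (φ m))) atTop (𝓝 q)}

/-- The sequence `γ_m` converges to the constant `pt` uniformly on compact subsets of `S`.  -/
def TendstoPtUnif (n : ℕ) (γ : ℕ → PU1n n) (pt : Prj n) (S : Set (Prj n)) : Prop :=
  ∀ C : Set (Prj n), IsCompact C → C ⊆ S → ∀ ε > (0 : ℝ),
    ∀ᶠ m in atTop, ∀ w ∈ C, dFS n (act n (γ m) w) pt < ε

/-- `f` is a Cartan map for `(y, x, Γ)`. -/
def IsCartanMap (n : ℕ) (Γ : Subgroup (PU1n n)) (y x : Prj n)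
    (f : LinesAt n y → LinesAt n x) : Prop :=
  Function.Bijective f ∧
  ∃ γ : ℕ → Γ, TendsSimply n (fun m => (γ m : PU1n n)) ∧
    TendstoPtUnif n (fun m => (γ m : PU1n n)) x (orthHyp n y)ᶜ ∧
    TendstoPtUnif n (fun m => (γ m : PU1n n)⁻¹) y (orthHyp n x)ᶜ ∧
    (∀ ℓ : LinesAt n y, ∀ w ∈ ℓ.1, Dlim n (fun m => (γ m : PU1n n)) w = (f ℓ).1) ∧
    (∀ ℓ : LinesAt n y, ∀ w ∈ (f ℓ).1, Dlim n (fun m => (γ m : PU1n n)⁻¹) w = ℓ.1)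

/-- `Γ(y,x)`: the set of Cartan maps for `(y, x, Γ)`. -/
def CartanSet (n : ℕ) (Γ : Subgroup (PU1n n)) (y x : Prj n) :
    Set (LinesAt n y → LinesAt n x) :=
  {f | IsCartanMap n Γ y x f}

/-- The projective span of a set of points of `ℙⁿ_ℂ`, as a set of points. -/
def projSpan (n : ℕ) (S : Set (Prj n)) : Set (Prj n) :=
  {r | r.rep ∈ Submodule.span ℂ (Projectivization.rep '' S)}

/-- The binary operation `⋆` on maps `p^⊥(p) → q^⊥(q)`:
`(μ ⋆ ν)(ℓ) = μ(Span((ν(ℓ) ∩ p^⊥) ∪ {p}))`. -/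
def starOp (n : ℕ) (p q : Prj n) (μ ν : LinesAt n p → LinesAt n q) :
    LinesAt n p → LinesAt n q :=
  fun ℓ =>
    letI := Classical.propDecidable
      (∃ ℓ' : LinesAt n p, ℓ'.1 = projSpan n (((ν ℓ).1 ∩ orthHyp n p) ∪ {p}))
    if h : ∃ ℓ' : LinesAt n p, ℓ'.1 = projSpan n (((ν ℓ).1 ∩ orthHyp n p) ∪ {p}) then
      μ h.choose
    else μ ℓ

section Form

variable {n : ℕ}

lemma Hmat_apply (i j : Fin (n + 1)) :
    Hmat n i j = if j = Equiv.swap 0 (Fin.last n) i then 1 else 0 := by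
  unfold Hmat
  rcases eq_or_ne i 0 with rfl | hi
  · rw [Equiv.swap_apply_left]
    by_cases hj : j = Fin.last n
    · simp [hj]
    · rw [if_neg hj, if_neg]
      rintro (⟨-, h⟩ | ⟨h0, rfl⟩ | ⟨-, h, -⟩)
      exacts [hj h, hj h0, h rfl]
  rcases eq_or_ne i (Fin.last n) with rfl | hil
  · simp [hi, Equiv.swap_apply_right]
  · rw [Equiv.swap_apply_of_ne_of_ne hi hil]
    simp [hi, hil, eq_comm]

lemma eq_swap_iff_eq_swap {i j : Fin (n + 1)} :
    j = Equiv.swap 0 (Fin.last n) i ↔ i = Equiv.swap 0 (Fin.last n) j := by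
  rw [eq_comm, Equiv.swap_apply_eq_iff]

lemma Hmat_mul_self : Hmat n * Hmat n = 1 := by
  ext i k
  simp [Matrix.mul_apply, Hmat_apply, Matrix.one_apply, eq_swap_iff_eq_swap (j := k),
    @eq_comm _ k i]

lemma Hmat_conjTranspose : (Hmat n)ᴴ = Hmat n := by
  ext i j
  simp [Hmat_apply, eq_swap_iff_eq_swap (j := i)]

lemma Hmat_transpose : (Hmat n)ᵀ = Hmat n := by
  ext i j
  simp [Hmat_apply, eq_swap_iff_eq_swap (j := i)]

lemma herm_eq_dotProduct (v w : Vc n) : herm n v w = v ⬝ᵥ Hmat n *ᵥ star w := by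
  simp [herm, dotProduct, Matrix.mulVec, Finset.mul_sum, mul_assoc]

lemma herm_eq_sum (v w : Vc n) :
    herm n v w = ∑ i, v i * conj (w (Equiv.swap 0 (Fin.last n) i)) := by
  simp [herm, Hmat_apply]

lemma herm_conj (v w : Vc n) : conj (herm n v w) = herm n w v := by
  rw [herm_eq_sum, herm_eq_sum, map_sum]
  conv_rhs => rw [← Equiv.sum_comp (Equiv.swap 0 (Fin.last n))]
  simp [mul_comm]

lemma herm_smul_left (c : ℂ) (v w : Vc n) : herm n (c • v) w = c * herm n v w := by
  simp [herm_eq_dotProduct]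

lemma herm_smul_right (c : ℂ) (v w : Vc n) : herm n v (c • w) = conj c * herm n v w := by
  simp [herm_eq_dotProduct, Matrix.mulVec_smul]

lemma herm_single_right (v : Vc n) (j : Fin (n + 1)) :
    herm n v (Pi.single j 1) = v (Equiv.swap 0 (Fin.last n) j) := by
  simp [herm_eq_sum, Pi.single_apply, Equiv.swap_apply_eq_iff]

lemma herm_single_left (j : Fin (n + 1)) (w : Vc n) :
    herm n (Pi.single j 1) w = conj (w (Equiv.swap 0 (Fin.last n) j)) := by
  simp [herm_eq_sum, Pi.single_apply]

lemma eq_of_forall_herm_eq {v w : Vc n} (h : ∀ u, herm n u v = herm n u w) : v = w := by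
  funext i
  apply (starRingEnd ℂ).injective
  simpa [herm_single_left] using h (Pi.single (Equiv.swap 0 (Fin.last n) i) 1)

lemma herm_self_re_nonneg_of_mul_eq_zero {u : Vc n} (h : u 0 * u (Fin.last n) = 0) :
    0 ≤ (herm n u u).re := by
  rw [herm_eq_sum, Complex.re_sum]
  refine Finset.sum_nonneg fun i _ => ?_
  rcases eq_or_ne i 0 with rfl | h0
  · rw [Equiv.swap_apply_left]
    rcases mul_eq_zero.mp h with h | h <;> simp [h]
  rcases eq_or_ne i (Fin.last n) with rfl | hl
  · rw [Equiv.swap_apply_right]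
    rcases mul_eq_zero.mp h with h | h <;> simp [h]
  · rw [Equiv.swap_apply_of_ne_of_ne h0 hl, Complex.mul_conj]
    exact Complex.normSq_nonneg _

end Form

section Adjoint

variable {n : ℕ}

def hermAdjoint (M : Mat n) : Mat n := Hmat n * Mᴴ * Hmat n

lemma herm_mulVec_left (M : Mat n) (v w : Vc n) :
    herm n (M *ᵥ v) w = herm n v (hermAdjoint M *ᵥ w) := by
  rw [herm_eq_dotProduct, herm_eq_dotProduct, dotProduct_comm, Matrix.dotProduct_mulVec,
    dotProduct_comm, hermAdjoint, Matrix.star_mulVec]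
  congr 1
  simp only [Matrix.conjTranspose_mul, Hmat_conjTranspose, Matrix.conjTranspose_conjTranspose]
  rw [← Matrix.vecMul_transpose, ← Matrix.vecMul_transpose, Hmat_transpose, Matrix.vecMul_vecMul,
    Matrix.vecMul_vecMul, Matrix.mul_assoc, Matrix.mul_assoc, Hmat_mul_self, Matrix.mul_one]

lemma hermAdjoint_smul (c : ℂ) (M : Mat n) : hermAdjoint (c • M) = conj c • hermAdjoint M := by
  simp [hermAdjoint, Matrix.conjTranspose_smul]

lemma continuous_hermAdjoint : Continuous (hermAdjoint (n := n)) :=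
  (continuous_const.mul continuous_id.matrix_conjTranspose).mul continuous_const

lemma hermAdjoint_mulVec_of_forall_mulVec_eq {M : Mat n} {a b : Vc n}
    (hM : ∀ v, M *ᵥ v = herm n v b • a) (v : Vc n) :
    hermAdjoint M *ᵥ v = herm n v a • b :=
  eq_of_forall_herm_eq fun u => by
    rw [← herm_mulVec_left, hM, herm_smul_left, herm_smul_right, herm_conj, mul_comm]

lemma matOf_mul_inv (g : U1n n) : matOf n g * matOf n g⁻¹ = 1 :=
  Units.mul_inv (g : GL (Fin (n + 1)) ℂ)

lemma matOf_inv_mul (g : U1n n) : matOf n g⁻¹ * matOf n g = 1 :=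
  Units.inv_mul (g : GL (Fin (n + 1)) ℂ)

lemma matOf_inv_eq_hermAdjoint (g : U1n n) : matOf n g⁻¹ = hermAdjoint (matOf n g) := by
  have hg : matOf n g * Hmat n * (matOf n g)ᴴ = Hmat n := g.2
  have hright : matOf n g * hermAdjoint (matOf n g) = 1 := by
    rw [hermAdjoint, ← Matrix.mul_assoc, ← Matrix.mul_assoc, hg, Hmat_mul_self]
  calc matOf n g⁻¹ = matOf n g⁻¹ * (matOf n g * hermAdjoint (matOf n g)) := by
        rw [hright, Matrix.mul_one]
    _ = hermAdjoint (matOf n g) := by rw [← Matrix.mul_assoc, matOf_inv_mul, Matrix.one_mul]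

lemma herm_matOf_mulVec (g : U1n n) (v w : Vc n) :
    herm n (matOf n g *ᵥ v) (matOf n g *ᵥ w) = herm n v w := by
  rw [herm_mulVec_left, ← matOf_inv_eq_hermAdjoint, Matrix.mulVec_mulVec, matOf_inv_mul,
    Matrix.one_mulVec]

end Adjoint

section Projective

variable {V : Type*} [AddCommGroup V] [Module ℂ V]

lemma mk_eq_mk_of_eq_smul {v w : V} {hv : v ≠ 0} {hw : w ≠ 0} {c : ℂ} (h : v = c • w) :
    Projectivization.mk ℂ v hv = Projectivization.mk ℂ w hw :=
  (Projectivization.mk_eq_mk_iff' ℂ v w hv hw).mpr ⟨c, h.symm⟩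

lemma exists_rep_eq_smul {v : V} (hv : v ≠ 0) :
    ∃ c : ℂˣ, (Projectivization.mk ℂ v hv).rep = (c : ℂ) • v := by
  obtain ⟨c, hc⟩ := Projectivization.exists_smul_eq_mk_rep ℂ v hv
  exact ⟨c, hc.symm⟩

lemma tendsto_mk [TopologicalSpace V] {ι : Type*} {l : Filter ι} {u : ι → V} {v : V}
    (hu : ∀ i, u i ≠ 0) (hv : v ≠ 0) (h : Tendsto u l (𝓝 v)) :
    Tendsto (fun i => Projectivization.mk ℂ (u i) (hu i)) l
      (𝓝 (Projectivization.mk ℂ v hv)) :=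
  (continuous_quotient_mk'.tendsto _).comp (tendsto_subtype_rng.mpr h)

end Projective

section Action

variable {n : ℕ}

lemma matOf_mulVec_ne_zero (g : U1n n) {v : Vc n} (hv : v ≠ 0) : matOf n g *ᵥ v ≠ 0 := by
  intro h
  apply hv
  rw [← Matrix.one_mulVec v, ← matOf_inv_mul g, ← Matrix.mulVec_mulVec, h, Matrix.mulVec_zero]

lemma act_mk (g : U1n n) {v : Vc n} (hv : v ≠ 0) :
    act n (QuotientGroup.mk g) (Projectivization.mk ℂ v hv)
      = Projectivization.mk ℂ (matOf n g *ᵥ v) (matOf_mulVec_ne_zero g hv) := by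
  rw [act, QuotientGroup.lift_mk]
  rfl

variable {ι : Type*} {l : Filter ι} {g : ι → U1n n} {c : ι → ℂ} {L : Mat n}

lemma tendsto_qpMk_of_tendsto_smul (hc : ∀ i, c i ≠ 0) (hL : L ≠ 0)
    (h : Tendsto (fun i => c i • matOf n (g i)) l (𝓝 L)) :
    Tendsto (fun i => qpMk n (g i)) l (𝓝 (Projectivization.mk ℂ L hL)) := by
  have hne i : c i • matOf n (g i) ≠ 0 := smul_ne_zero (hc i) (matOf_ne_zero n (g i))
  refine (tendsto_mk hne hL h).congr fun i => ?_
  exact mk_eq_mk_of_eq_smul rfl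

lemma tendsto_act_of_tendsto_smul (hc : ∀ i, c i ≠ 0)
    (h : Tendsto (fun i => c i • matOf n (g i)) l (𝓝 L))
    {v : Vc n} (hv : v ≠ 0) (hLv : L *ᵥ v ≠ 0) :
    Tendsto (fun i => act n (QuotientGroup.mk (g i)) (Projectivization.mk ℂ v hv)) l
      (𝓝 (Projectivization.mk ℂ (L *ᵥ v) hLv)) := by
  have hne i : (c i • matOf n (g i)) *ᵥ v ≠ 0 := by
    rw [Matrix.smul_mulVec]
    exact smul_ne_zero (hc i) (matOf_mulVec_ne_zero (g i) hv)
  have hconv := ((continuous_id.matrix_mulVec continuous_const :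
    Continuous fun M : Mat n => M *ᵥ v).tendsto L).comp h
  refine (tendsto_mk hne hLv hconv).congr fun i => ?_
  rw [act_mk]
  exact mk_eq_mk_of_eq_smul (Matrix.smul_mulVec _ _ _)

end Action

section RankOne

variable {n : ℕ} {L : Mat n} {a b : Vc n}

lemma imSet_mk_of_mulVec_eq (hL : L ≠ 0) (ha : a ≠ 0)
    (hLab : ∀ v, L *ᵥ v = herm n v b • a) {w : Vc n} (hwb : herm n w b ≠ 0) :
    ImSet n (Projectivization.mk ℂ L hL) = {Projectivization.mk ℂ a ha} := by
  obtain ⟨u, hu⟩ := exists_rep_eq_smul hL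
  have hrep v : (Projectivization.mk ℂ L hL).rep *ᵥ v = ((u : ℂ) * herm n v b) • a := by
    rw [hu, Matrix.smul_mulVec, hLab, smul_smul]
  ext q
  constructor
  · rintro ⟨v, hv, rfl⟩
    exact mk_eq_mk_of_eq_smul (hrep v)
  · rintro rfl
    have hne : (Projectivization.mk ℂ L hL).rep *ᵥ w ≠ 0 := by
      rw [hrep]
      exact smul_ne_zero (mul_ne_zero u.ne_zero hwb) ha
    exact ⟨w, hne, (mk_eq_mk_of_eq_smul (hrep w)).symm⟩

lemma kerSet_mk_of_mulVec_eq (hL : L ≠ 0) (ha : a ≠ 0) (hb : b ≠ 0)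
    (hLab : ∀ v, L *ᵥ v = herm n v b • a) :
    KerSet n (Projectivization.mk ℂ L hL) = orthHyp n (Projectivization.mk ℂ b hb) := by
  obtain ⟨u, hu⟩ := exists_rep_eq_smul hL
  obtain ⟨u', hu'⟩ := exists_rep_eq_smul hb
  ext q
  simp [KerSet, orthHyp, hu, hu', Matrix.smul_mulVec, hLab, herm_smul_right, smul_smul, ha]

end RankOne

section HyperbolicSpace

variable {n : ℕ}

lemma zero_ne_last (hn : n ≠ 0) : (0 : Fin (n + 1)) ≠ Fin.last n :=
  fun h => hn (by simpa using (congrArg Fin.val h).symm)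

lemma mk_mem_ball {w : Vc n} (hw : (herm n w w).re < 0) (hw0 : w ≠ 0) :
    Projectivization.mk ℂ w hw0 ∈ ball n := by
  obtain ⟨u, hu⟩ := exists_rep_eq_smul hw0
  show (herm n _ _).re < 0
  rw [hu, herm_smul_left, herm_smul_right, ← mul_assoc, Complex.mul_conj, Complex.re_ofReal_mul]
  exact mul_neg_of_pos_of_neg (Complex.normSq_pos.mpr u.ne_zero) hw

lemma exists_herm_self_re_neg (hn : n ≠ 0) : ∃ w : Vc n, (herm n w w).re < 0 := by
  refine ⟨Pi.single 0 1 - Pi.single (Fin.last n) 1, ?_⟩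
  have h0 := zero_ne_last hn
  rw [herm_eq_sum, Fintype.sum_eq_add 0 (Fin.last n) h0 fun i ⟨hi0, hil⟩ => ?_]
  · simp [h0, h0.symm]
  · simp [Pi.single_apply, hi0, hil]

lemma herm_matOf_single_ne_zero (g : U1n n) {w : Vc n} (hw : (herm n w w).re < 0)
    {j : Fin (n + 1)} (hj : j = 0 ∨ j = Fin.last n) :
    herm n w (matOf n g *ᵥ Pi.single j 1) ≠ 0 := by
  set u := matOf n g⁻¹ *ᵥ w
  have hu : herm n w (matOf n g *ᵥ Pi.single j 1) = u (Equiv.swap 0 (Fin.last n) j) := by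
    rw [← herm_matOf_mulVec g⁻¹ w, Matrix.mulVec_mulVec, matOf_inv_mul, Matrix.one_mulVec,
      herm_single_right]
  have huu : u 0 * u (Fin.last n) ≠ 0 := fun h => by
    have := herm_self_re_nonneg_of_mul_eq_zero h
    rw [herm_matOf_mulVec] at this
    linarith
  rw [hu]
  rcases hj with rfl | rfl
  · simpa using right_ne_zero_of_mul huu
  · simpa using left_ne_zero_of_mul huu

lemma herm_matOf_single_self (hn : n ≠ 0) (g : U1n n) {j : Fin (n + 1)}
    (hj : j = 0 ∨ j = Fin.last n) :
    herm n (matOf n g *ᵥ Pi.single j 1) (matOf n g *ᵥ Pi.single j 1) = 0 := by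
  have h0 := zero_ne_last hn
  rw [herm_matOf_mulVec, herm_single_right]
  rcases hj with rfl | rfl <;> simp [h0, h0.symm]

end HyperbolicSpace

section Cartan

variable {n : ℕ}

def Emat (n : ℕ) : Mat n := Matrix.diagonal (Pi.single 0 1)

lemma Emat_mulVec (u : Vc n) : Emat n *ᵥ u = u 0 • Pi.single 0 1 := by
  ext i
  rcases eq_or_ne i 0 with rfl | hi <;> simp [Emat, Matrix.mulVec_diagonal, *]

variable {ι : Type*} {l : Filter ι}

lemma tendsto_exp_neg_smul_Amat {lam : ι → ℝ} (hlam : Tendsto lam l atTop) :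
    Tendsto (fun i => (Real.exp (-lam i) : ℂ) • Amat n (lam i)) l (𝓝 (Emat n)) := by
  have hexp : Tendsto (fun i => (Real.exp (-lam i) : ℂ)) l (𝓝 0) := by
    simpa only [Function.comp_def, Complex.ofReal_zero] using
      (Complex.continuous_ofReal.tendsto 0).comp
        (Real.tendsto_exp_atBot.comp (tendsto_neg_atTop_atBot.comp hlam))
  simp only [Amat, Emat, ← Matrix.diagonal_smul]
  refine ((continuous_id.matrix_diagonal).tendsto _).comp (tendsto_pi_nhds.mpr fun j => ?_)
  rcases eq_or_ne j 0 with rfl | hj0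
  · simp only [Pi.smul_apply, if_pos, smul_eq_mul, ← Complex.ofReal_mul, ← Real.exp_add,
      neg_add_cancel, Real.exp_zero, Complex.ofReal_one]
    exact tendsto_const_nhds
  rcases eq_or_ne j (Fin.last n) with rfl | hjl
  · simpa [hj0] using hexp.mul hexp
  · simpa [hj0, hjl] using hexp

lemma tendsto_exp_neg_smul_of_eq_mul_Amat_mul {G k₁ k₂ : ι → Mat n} {K₁ K₂ : Mat n}
    {lam : ι → ℝ} (hG : ∀ i, G i = k₁ i * Amat n (lam i) * k₂ i)
    (hk₁ : Tendsto k₁ l (𝓝 K₁)) (hk₂ : Tendsto k₂ l (𝓝 K₂)) (hlam : Tendsto lam l atTop) :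
    Tendsto (fun i => (Real.exp (-lam i) : ℂ) • G i) l (𝓝 (K₁ * Emat n * K₂)) := by
  refine ((hk₁.mul (tendsto_exp_neg_smul_Amat hlam)).mul hk₂).congr fun i => ?_
  rw [hG, Matrix.mul_smul, Matrix.smul_mul]

lemma mul_Emat_mul_mulVec (K₁ : Mat n) (K₂ : U1n n) (v : Vc n) :
    (K₁ * Emat n * matOf n K₂) *ᵥ v
      = herm n v (matOf n K₂⁻¹ *ᵥ Pi.single (Fin.last n) 1) • (K₁ *ᵥ Pi.single 0 1) := by
  rw [← Matrix.mulVec_mulVec, ← Matrix.mulVec_mulVec, Emat_mulVec, Matrix.mulVec_smul,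
    ← herm_matOf_mulVec K₂, Matrix.mulVec_mulVec, matOf_mul_inv, Matrix.one_mulVec,
    herm_single_right, Equiv.swap_apply_right]

end Cartan

section Limits

variable {n : ℕ} {Γ : Subgroup (PU1n n)} {γ : ℕ → Γ} {g : ℕ → U1n n} {c : ℕ → ℂ} {L : Mat n}
  {a b w : Vc n}

lemma limits_of_tendsto_smul_rankOne (hγ : Function.Injective γ)
    (hg : ∀ m, (QuotientGroup.mk (g m) : PU1n n) = γ m) (hc : ∀ m, c m ≠ 0)
    (hL : Tendsto (fun m => c m • matOf n (g m)) atTop (𝓝 L))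
    (ha : a ≠ 0) (hb : b ≠ 0) (haa : herm n a a = 0) (hLab : ∀ v, L *ᵥ v = herm n v b • a)
    (hw : (herm n w w).re < 0) (hwb : herm n w b ≠ 0) :
    ∃ hL0 : L ≠ 0, Tendsto (fun m => qpMk n (g m)) atTop (𝓝 (Projectivization.mk ℂ L hL0)) ∧
      Projectivization.mk ℂ a ha ∈ LambdaCG n Γ ∧
      ImSet n (Projectivization.mk ℂ L hL0) = {Projectivization.mk ℂ a ha} ∧
      KerSet n (Projectivization.mk ℂ L hL0) = orthHyp n (Projectivization.mk ℂ b hb) := by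
  have hLw : L *ᵥ w ≠ 0 := by
    rw [hLab]
    exact smul_ne_zero hwb ha
  have hL0 : L ≠ 0 := fun h => hLw (by rw [h, Matrix.zero_mulVec])
  have hw0 : w ≠ 0 := fun h => by simp [h, herm_eq_sum] at hw
  have horbit := tendsto_act_of_tendsto_smul hc hL hw0 hLw
  rw [show Projectivization.mk ℂ (L *ᵥ w) hLw = Projectivization.mk ℂ a ha from
    mk_eq_mk_of_eq_smul (hLab w)] at horbit
  simp only [hg] at horbit
  refine ⟨hL0, tendsto_qpMk_of_tendsto_smul hc hL0 hL, ⟨?_, _, mk_mem_ball hw hw0, γ, hγ, horbit⟩,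
    imSet_mk_of_mulVec_eq hL0 ha hLab hwb, kerSet_mk_of_mulVec_eq hL0 ha hb hLab⟩
  obtain ⟨u, hu⟩ := exists_rep_eq_smul ha
  show herm n _ _ = 0
  rw [hu, herm_smul_left, herm_smul_right, haa, mul_zero, mul_zero]

end Limits

theorem pseudo_projective_limits_of_tends_simply_general
    (n : ℕ) (hn : 2 ≤ n) (Γ : Subgroup (PU1n n))
    (γ : ℕ → Γ) (hts : TendsSimply n (fun m => (γ m : PU1n n))) :
    ∃ (τ θ : QP n) (ptau pth : Prj n) (g : ℕ → U1n n),
      (∀ m, (QuotientGroup.mk (g m) : PU1n n) = (γ m : PU1n n)) ∧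
      Tendsto (fun m => qpMk n (g m)) atTop (𝓝 τ) ∧
      Tendsto (fun m => qpMk n ((g m)⁻¹)) atTop (𝓝 θ) ∧
      ptau ∈ LambdaCG n Γ ∧ pth ∈ LambdaCG n Γ ∧
      ImSet n τ = {ptau} ∧ ImSet n θ = {pth} ∧
      orthHyp n ptau = KerSet n θ ∧ orthHyp n pth = KerSet n τ := by
  obtain ⟨hinj, g, k₁, k₂, lam, K₁, K₂, hg, -, -, -, -, hdec, hk₁, hk₂, hlam⟩ := hts
  have hn0 : n ≠ 0 := by omega
  set a := matOf n K₁ *ᵥ Pi.single 0 1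
  set b := matOf n K₂⁻¹ *ᵥ Pi.single (Fin.last n) 1
  set M := matOf n K₁ * Emat n * matOf n K₂
  have hM : ∀ v, M *ᵥ v = herm n v b • a := mul_Emat_mul_mulVec _ K₂
  have hlim := tendsto_exp_neg_smul_of_eq_mul_Amat_mul hdec hk₁ hk₂ hlam
  have hlim' : Tendsto (fun m => conj (Real.exp (-lam m) : ℂ) • matOf n (g m)⁻¹) atTop
      (𝓝 (hermAdjoint M)) := by
    simpa only [Function.comp_def, hermAdjoint_smul, ← matOf_inv_eq_hermAdjoint] using
      (continuous_hermAdjoint.tendsto M).comp hlim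
  have ha : a ≠ 0 := matOf_mulVec_ne_zero K₁ (Pi.single_ne_zero_iff.mpr one_ne_zero)
  have hb : b ≠ 0 := matOf_mulVec_ne_zero K₂⁻¹ (Pi.single_ne_zero_iff.mpr one_ne_zero)
  obtain ⟨w, hw⟩ := exists_herm_self_re_neg hn0
  have hγ : Function.Injective γ := fun _ _ h => hinj (congrArg Subtype.val h)
  obtain ⟨_, hτ, haΛ, hImτ, hKerτ⟩ := limits_of_tendsto_smul_rankOne hγ hg
    (fun m => by simp) hlim ha hb
    (herm_matOf_single_self hn0 K₁ (.inl rfl)) hM hw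
    (herm_matOf_single_ne_zero K₂⁻¹ hw (.inr rfl))
  obtain ⟨_, hθ, hbΛ, hImθ, hKerθ⟩ := limits_of_tendsto_smul_rankOne
    (γ := fun m => (γ m)⁻¹) (inv_injective.comp hγ) (fun m => by simp [hg])
    (fun m => by simp) hlim' hb ha
    (herm_matOf_single_self hn0 K₂⁻¹ (.inr rfl)) (hermAdjoint_mulVec_of_forall_mulVec_eq hM) hw
    (herm_matOf_single_ne_zero K₁ hw (.inl rfl))
  exact ⟨_, _, _, _, g, hg, hτ, hθ, haΛ, hbΛ, hImτ, hImθ, hKerθ.symm, hKerτ.symm⟩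

/-- If `Γ ⊆ PU(1,n)` is discrete and `(γ_m) ⊆ Γ` tends simply to infinity,
then there are pseudo-projective maps `τ`, `ϑ` with `γ_m → τ`, `γ_m⁻¹ → ϑ` in `QP(n+1,ℂ)`, whose
images are single points of the Chen–Greenberg limit set satisfying `Im(τ)^⊥ = Ker(ϑ)` and
`Im(ϑ)^⊥ = Ker(τ)`. -/
theorem pseudo_projective_limits_of_tends_simply
    (n : ℕ) (hn : 2 ≤ n) (Γ : Subgroup (PU1n n)) (hdisc : DiscreteTopology Γ)
    (γ : ℕ → Γ) (hts : TendsSimply n (fun m => (γ m : PU1n n))) :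
    ∃ (τ θ : QP n) (ptau pth : Prj n) (g : ℕ → U1n n),
      (∀ m, (QuotientGroup.mk (g m) : PU1n n) = (γ m : PU1n n)) ∧
      Tendsto (fun m => qpMk n (g m)) atTop (𝓝 τ) ∧
      Tendsto (fun m => qpMk n ((g m)⁻¹)) atTop (𝓝 θ) ∧
      ptau ∈ LambdaCG n Γ ∧ pth ∈ LambdaCG n Γ ∧
      ImSet n τ = {ptau} ∧ ImSet n θ = {pth} ∧
      orthHyp n ptau = KerSet n θ ∧ orthHyp n pth = KerSet n τ :=
  pseudo_projective_limits_of_tends_simply_general n hn Γ γ hts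

end CKG
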